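/- For integers s ≥ 2 and m, l ≥ 0, one has Σ_{a=0}^{m} ( O_{m−a}((s+a+3) ⧢ ({2}^l)) + O_{m−a}((s+a+2) ⧢ (3) ⧢ ({2}^{l−1})) ) = Σ_{m_1+⋯+m_{l+1}=m+s, m_i≥0} ( Σ_{p=1}^{l+1} max{m_p−s+1, 0} ) · Σ_{i=1}^{l+1} ζ(m_1+2, …, m_{i−1}+2, m_i+3, m_{i+1}+2, …, m_{l+1}+2), where for l = 0 the term involving ({2}^{l−1}) is understood to be 0. -/

import Mathlib

open scoped BigOperators

/-- The multiple zeta value of an index `k = (k₁, …, k_r)`: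
`ζ(k₁,…,k_r) = Σ_{1 ≤ m₁ < ⋯ < m_r} 1/(m₁^{k₁} ⋯ m_r^{k_r})`,
written as a `tsum` over strictly increasing tuples of positive integers. -/
noncomputable def mzv (k : List ℕ) : ℝ :=
  ∑' f : {f : Fin k.length → ℕ+ // StrictMono f},
    ∏ i : Fin k.length, (1 : ℝ) / (((f.1 i : ℕ) : ℝ) ^ (k.get i))

/-- Formal ℚ-linear combinations of indices. -/
abbrev IndexSum := List ℕ →₀ ℚ

/-- An index viewed as a formal sum. -/
noncomputable def ofIdx (k : List ℕ) : IndexSum := Finsupp.single k 1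

/-- ζ extended ℚ-linearly to formal sums of indices. -/
noncomputable def mzvL (x : IndexSum) : ℝ := x.sum fun k c => (c : ℝ) * mzv k

/-- The Ohno sum `O_m(k) = Σ_{|e| = m} ζ(k ⊕ e)`. -/
noncomputable def ohno (m : ℕ) (k : List ℕ) : ℝ :=
  ∑ e ∈ Finset.Nat.antidiagonalTuple k.length m,
    mzv (List.ofFn fun i : Fin k.length => k.get i + e i)

/-- The Ohno sum extended ℚ-linearly to formal sums of indices. -/
noncomputable def ohnoL (m : ℕ) (x : IndexSum) : ℝ := x.sum fun k c => (c : ℝ) * ohno m k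

/-- The multiset of shuffles of two lists. -/
def shuffles : List ℕ → List ℕ → Multiset (List ℕ)
  | [], l => {l}
  | a :: k, [] => {a :: k}
  | a :: k, b :: l =>
      ((shuffles k (b :: l)).map (a :: ·)) + ((shuffles (a :: k) l).map (b :: ·))
  termination_by k l => k.length + l.length

/-- The shuffle product of two indices, as a formal sum of indices. -/
noncomputable def shufL (k l : List ℕ) : IndexSum := ((shuffles k l).map ofIdx).sum

/-- The shuffle product, extended ℚ-bilinearly to formal sums of indices. -/
noncomputable def shuf (x y : IndexSum) : IndexSum :=
  x.sum fun k c => y.sum fun l d => (c * d) • shufL k l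

/-- Encoding of an index as a binary word: an entry `a` becomes the block
`false, true, …, true` with `a - 1` trues. -/
def encodeIdx (k : List ℕ) : List Bool := k.flatMap fun a => false :: List.replicate (a - 1) true

/-- Auxiliary decoder. -/
def decodeAux : List Bool → ℕ → List ℕ
  | [], n => [n]
  | false :: w, n => n :: decodeAux w 1
  | true :: w, n => decodeAux w (n + 1)

/-- Decoding of a binary word into an index. -/
def decodeIdx : List Bool → List ℕ
  | [] => []
  | _ :: w => decodeAux w 1

/-- The dual index `k†`: reverse the binary word of `k` and swap the letters. -/
def dualIdx (k : List ℕ) : List ℕ := decodeIdx (((encodeIdx k).reverse).map (fun b => !b))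

/-- Duality extended termwise to formal sums of indices. -/
noncomputable def dualL (x : IndexSum) : IndexSum := Finsupp.mapDomain dualIdx x

/-- `(a) ⊛ (l₁,…,l_r) = Σ_{i=1}^{r} (l₁,…,l_{i-1}, l_i + a, l_{i+1},…,l_r)`. -/
noncomputable def hastIdx (a : ℕ) (l : List ℕ) : IndexSum :=
  ∑ i : Fin l.length, Finsupp.single (l.set i (l.get i + a)) 1

/-- `⊛` extended ℚ-linearly in the second argument. -/
noncomputable def hast (a : ℕ) (x : IndexSum) : IndexSum := x.sum fun l c => c • hastIdx a l

/-- `Σ_{|e| = m} ζ((a) ⊛ (x ⊕ e))`, where for each index occurring in `x` the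
sequence `e` of nonnegative integers runs over the suitable depth (the depth of
that index) with entry sum `m`, and `⊕ e` is applied termwise. -/
noncomputable def zetaHastSum (a m : ℕ) (x : IndexSum) : ℝ :=
  x.sum fun k c => (c : ℝ) *
    ∑ e ∈ Finset.Nat.antidiagonalTuple k.length m,
      mzvL (hastIdx a (List.ofFn fun i : Fin k.length => k.get i + e i))

/-- Appending an entry `a` to each index occurring in a formal sum. -/
noncomputable def appendL (x : IndexSum) (a : ℕ) : IndexSum :=
  Finsupp.mapDomain (fun k => k ++ [a]) x

/-- `F_{m,l}(s; k) = O_m((s) ⧢ k ⧢ ({2}^l)) − O_m((s) ⧢ (k ⧢ ({2}^l))†)`. -/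
noncomputable def F (m l s : ℕ) (k : List ℕ) : ℝ :=
  ohnoL m (shuf (ofIdx [s]) (shufL k (List.replicate l 2)))
    - ohnoL m (shuf (ofIdx [s]) (dualL (shufL k (List.replicate l 2))))

/-- `D_{m,l}(s,t) = F_{m,l}(s;(t+1)) − F_{m,l}(t;(s+1))`. -/
noncomputable def D (m l s t : ℕ) : ℝ := F m l s [t + 1] - F m l t [s + 1]

/-!
Both sides are finite combinations of the values `ζ(h₁ + 2, …, h_{l+1} + 2)` with `|h| = m + s + 1`,
and the identity holds coefficient by coefficient. Shuffling one letter `c + 2` into a word of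
`2`s and `3`s inserts it at each position, so every Ohno sum on the left is a sum of `ζ(h + 2)`
over the translates `h = e + g` of the Ohno vectors `e`, i.e. over all `h ≥ g` of the right weight.
Summing over `a` then counts the admissible `a`: the first term contributes `Σ_i (h_i - s)` and
the second `Σ_{q ≠ i, h_q ≥ 1} (h_i + 1 - s)`. On the right, `h = f + δ_i` with `h_i ≥ 1`, and
`Σ_p ((h - δ_i)_p + 1 - s)` splits into exactly these diagonal and off-diagonal parts.
Truncated subtraction on `ℕ` plays the role of `max{·, 0}` throughout.
-/

open Finset

theorem List.insertIdx_ofFn {α : Type*} {n : ℕ} (v : Fin n → α) (i : Fin (n + 1)) (x : α) :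
    (List.ofFn v).insertIdx i x = List.ofFn (Fin.insertNth i x v) := by
  refine List.ext_getElem (by simp [List.length_insertIdx, i.is_le]) fun t h₁ h₂ => ?_
  rw [List.getElem_ofFn, List.getElem_insertIdx]
  rcases lt_trichotomy t i with hlt | rfl | hgt
  · rw [dif_pos hlt, List.getElem_ofFn, Fin.insertNth_apply_below (by exact hlt), eq_rec_constant]
    rfl
  · simp
  · rw [dif_neg (by omega), dif_neg (by omega), List.getElem_ofFn,
      Fin.insertNth_apply_above (by exact hgt), eq_rec_constant]
    rfl

theorem Pi.forall_single_le_iff {ι α : Type*} [DecidableEq ι] [AddCommMonoid α] [PartialOrder α]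
    [CanonicallyOrderedAdd α] {i : ι} {a : α} {f : ι → α} :
    (∀ j, (Pi.single i a : ι → α) j ≤ f j) ↔ a ≤ f i := by
  refine ⟨fun h => by simpa using h i, fun h j => ?_⟩
  rcases eq_or_ne j i with rfl | hj
  · simpa using h
  · simp [hj]

theorem Finset.sum_sum_sum_filter_eq_sum_card_smul {α ι β M : Type*} [AddCommMonoid M]
    (s : Finset α) (J : Finset ι) (t : Finset β) (p : α → ι → β → Prop)
    [∀ a j b, Decidable (p a j b)] (f : β → M) :
    ∑ a ∈ s, ∑ j ∈ J, ∑ b ∈ t with p a j b, f b = ∑ b ∈ t, (∑ j ∈ J, #{a ∈ s | p a j b}) • f b := by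
  simp_rw [sum_filter, sum_smul, card_filter, sum_smul, ite_smul, one_smul, zero_smul]
  rw [sum_comm, sum_comm (s := t)]
  exact sum_congr rfl fun j _ => sum_comm

theorem Fin.sum_erase_eq_sum_succAbove {M : Type*} [AddCommMonoid M] {n : ℕ}
    (f : Fin (n + 1) → M) (i : Fin (n + 1)) :
    ∑ q ∈ univ.erase i, f q = ∑ q, f (i.succAbove q) := by
  rw [← compl_singleton, ← Fin.image_succAbove_univ,
    sum_image fun _ _ _ _ h => Fin.succAbove_right_injective h]

theorem Finset.filter_range_add_le {m s x : ℕ} (hx : x ≤ m + s) :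
    {a ∈ range (m + 1) | s + a ≤ x} = range (x + 1 - s) := by
  ext a
  simp only [mem_filter, mem_range]
  omega

theorem Finset.Nat.sum_antidiagonalTuple_add {M : Type*} [AddCommMonoid M] (n k : ℕ)
    (g : Fin n → ℕ) (F : (Fin n → ℕ) → M) :
    ∑ e ∈ antidiagonalTuple n k, F (e + g)
      = ∑ h ∈ antidiagonalTuple n (k + ∑ t, g t) with ∀ t, g t ≤ h t, F h := by
  refine sum_nbij' (· + g) (· - g) (fun e he => ?_) (fun h hh => ?_) (fun e _ => ?_)
    (fun h hh => ?_) (fun _ _ => rfl)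
  · simp only [mem_filter, mem_antidiagonalTuple] at he ⊢
    simp [sum_add_distrib, he]
  · simp only [mem_filter, mem_antidiagonalTuple] at hh ⊢
    rw [Pi.sub_def, sum_tsub_distrib _ fun t _ => hh.2 t, hh.1, add_tsub_cancel_right]
  · simp
  · simp only [mem_filter, mem_antidiagonalTuple] at hh
    exact tsub_add_cancel_of_le hh.2

theorem Finset.Nat.apply_le_of_mem_antidiagonalTuple {n k : ℕ} {h : Fin n → ℕ}
    (hh : h ∈ antidiagonalTuple n k) (i : Fin n) : h i ≤ k :=
  (mem_antidiagonalTuple.1 hh) ▸ single_le_sum (fun t _ => Nat.zero_le (h t)) (mem_univ i)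

theorem Finset.Nat.apply_add_apply_le_of_mem_antidiagonalTuple {n k : ℕ} {h : Fin n → ℕ}
    (hh : h ∈ antidiagonalTuple n k) {i j : Fin n} (hij : i ≠ j) : h i + h j ≤ k := by
  rw [← sum_pair hij, ← mem_antidiagonalTuple.1 hh]
  exact sum_le_sum_of_subset (subset_univ _)

theorem ohnoL_ofIdx (m : ℕ) (k : List ℕ) : ohnoL m (ofIdx k) = ohno m k := by
  simp [ohnoL, ofIdx]

theorem ohnoL_add (m : ℕ) (x y : IndexSum) : ohnoL m (x + y) = ohnoL m x + ohnoL m y :=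
  Finsupp.sum_add_index' (by simp) fun _ _ _ => by push_cast; ring

theorem ohnoL_sum {ι : Type*} (m : ℕ) (s : Finset ι) (x : ι → IndexSum) :
    ohnoL m (∑ i ∈ s, x i) = ∑ i ∈ s, ohnoL m (x i) :=
  map_sum (AddMonoidHom.mk' (ohnoL m) (ohnoL_add m)) x s

theorem shuf_ofIdx_ofIdx (k l : List ℕ) : shuf (ofIdx k) (ofIdx l) = shufL k l := by
  simp [shuf, ofIdx]

theorem shuf_ofIdx (k : List ℕ) (y : IndexSum) :
    shuf (ofIdx k) y = y.sum fun l d => d • shufL k l := by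
  simp [shuf, ofIdx]

theorem shuf_ofIdx_add (k : List ℕ) (y z : IndexSum) :
    shuf (ofIdx k) (y + z) = shuf (ofIdx k) y + shuf (ofIdx k) z := by
  simp only [shuf_ofIdx]
  exact Finsupp.sum_add_index' (by simp) fun _ _ _ => add_smul _ _ _

theorem shuf_ofIdx_sum {ι : Type*} (k : List ℕ) (s : Finset ι) (y : ι → IndexSum) :
    shuf (ofIdx k) (∑ i ∈ s, y i) = ∑ i ∈ s, shuf (ofIdx k) (y i) :=
  map_sum (AddMonoidHom.mk' (shuf (ofIdx k)) (shuf_ofIdx_add k)) y s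

theorem shuffles_singleton_left (x : ℕ) : ∀ w : List ℕ,
    shuffles [x] w = ((List.range (w.length + 1)).map fun i => w.insertIdx i x : List (List ℕ))
  | [] => by rw [shuffles]; rfl
  | b :: w => by
      rw [shuffles, shuffles_singleton_left x w]
      simp [shuffles, List.range_succ_eq_map, List.map_map, Function.comp_def,
        List.insertIdx_succ_cons]

theorem shufL_singleton_ofFn {n : ℕ} (x : ℕ) (v : Fin n → ℕ) :
    shufL [x] (List.ofFn v) = ∑ i : Fin (n + 1), ofIdx (List.ofFn (Fin.insertNth i x v)) := by
  simp_rw [← List.insertIdx_ofFn]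
  rw [Fin.sum_univ_eq_sum_range (fun i => ofIdx ((List.ofFn v).insertIdx i x)), shufL,
    shuffles_singleton_left, List.length_ofFn, Multiset.map_coe, List.map_map]
  rfl

theorem ohno_ofFn {n : ℕ} (M : ℕ) (v : Fin n → ℕ) :
    ohno M (List.ofFn v) = ∑ e ∈ Finset.Nat.antidiagonalTuple n M,
      mzv (List.ofFn fun t => v t + e t) := by
  suffices ∀ k : List ℕ, (h : k.length = n) → (∀ i, k.get i = v (Fin.cast h i)) →
      ohno M k = ∑ e ∈ Finset.Nat.antidiagonalTuple n M, mzv (List.ofFn fun t => v t + e t) from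
    this _ List.length_ofFn fun i => List.get_ofFn v i
  rintro k rfl hv
  refine sum_congr rfl fun e _ => congrArg mzv (List.ofFn_inj.mpr (funext fun t => ?_))
  rw [hv t]
  rfl

noncomputable def mzvAddTwo {n : ℕ} (h : Fin n → ℕ) : ℝ := mzv (List.ofFn fun t => h t + 2)

theorem ohno_ofFn_add_two {n : ℕ} (M : ℕ) (g : Fin n → ℕ) :
    ohno M (List.ofFn fun t => g t + 2)
      = ∑ h ∈ Finset.Nat.antidiagonalTuple n (M + ∑ t, g t) with ∀ t, g t ≤ h t, mzvAddTwo h := by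
  rw [ohno_ofFn, ← Finset.Nat.sum_antidiagonalTuple_add]
  refine sum_congr rfl fun e _ => congrArg mzv (List.ofFn_inj.mpr (funext fun t => ?_))
  simp only [Pi.add_apply]
  ring

theorem shufL_singleton_ofFn_add_two {n : ℕ} (c : ℕ) (g : Fin n → ℕ) :
    shufL [c + 2] (List.ofFn fun t => g t + 2)
      = ∑ i : Fin (n + 1),
          ofIdx (List.ofFn fun t => (i.insertNth c g : Fin (n + 1) → ℕ) t + 2) := by
  rw [shufL_singleton_ofFn]
  refine sum_congr rfl fun i _ => congrArg ofIdx (List.ofFn_inj.mpr (funext fun t => ?_))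
  induction t using Fin.succAboveCases i <;> simp

theorem ohnoL_shufL_singleton {n : ℕ} (M c : ℕ) (g : Fin n → ℕ) :
    ohnoL M (shufL [c + 2] (List.ofFn fun t => g t + 2))
      = ∑ i : Fin (n + 1), ∑ h ∈ Finset.Nat.antidiagonalTuple (n + 1) (M + (c + ∑ t, g t))
          with ∀ t, (i.insertNth c g : Fin (n + 1) → ℕ) t ≤ h t, mzvAddTwo h := by
  rw [shufL_singleton_ofFn_add_two, ohnoL_sum]
  refine sum_congr rfl fun i _ => ?_
  rw [ohnoL_ofIdx, ohno_ofFn_add_two, Fin.sum_insertNth]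

theorem shufL_singleton_replicate_two (c l : ℕ) :
    shufL [c + 2] (List.replicate l 2)
      = ∑ i : Fin (l + 1), ofIdx (List.ofFn fun t => (Pi.single i c : Fin (l + 1) → ℕ) t + 2) := by
  rw [show List.replicate l 2 = List.ofFn fun t : Fin l => (0 : Fin l → ℕ) t + 2 by
    simp [List.ofFn_const], shufL_singleton_ofFn_add_two]
  simp only [Fin.insertNth_zero_right]

theorem sum_ohnoL_shufL_replicate (s m l : ℕ) :
    ∑ a ∈ range (m + 1), ohnoL (m - a) (shufL [s + a + 3] (List.replicate l 2))
      = ∑ h ∈ Finset.Nat.antidiagonalTuple (l + 1) (m + s + 1), (∑ i, (h i - s)) • mzvAddTwo h := by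
  have hterm : ∀ a ∈ range (m + 1), ohnoL (m - a) (shufL [s + a + 3] (List.replicate l 2))
      = ∑ i : Fin (l + 1), ∑ h ∈ Finset.Nat.antidiagonalTuple (l + 1) (m + s + 1)
          with s + 1 + a ≤ h i, mzvAddTwo h := by
    intro a ha
    rw [mem_range] at ha
    rw [show s + a + 3 = s + a + 1 + 2 by ring, shufL_singleton_replicate_two, ohnoL_sum]
    refine sum_congr rfl fun i _ => ?_
    rw [ohnoL_ofIdx, ohno_ofFn_add_two, Fintype.sum_pi_single',
      show m - a + (s + a + 1) = m + s + 1 by omega]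
    simp only [Pi.forall_single_le_iff, add_right_comm s a 1]
  rw [sum_congr rfl hterm, sum_sum_sum_filter_eq_sum_card_smul]
  refine sum_congr rfl fun h hh => congrArg (· • _) (sum_congr rfl fun i _ => ?_)
  rw [filter_range_add_le (by have := Finset.Nat.apply_le_of_mem_antidiagonalTuple hh i; omega),
    card_range]
  omega

theorem card_filter_range_add_le_and {m s x y : ℕ} (hxy : x + y ≤ m + s + 1) :
    #{a ∈ range (m + 1) | s + a ≤ x ∧ 1 ≤ y} = if 1 ≤ y then x + 1 - s else 0 := by
  by_cases hy : 1 ≤ y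
  · simp only [hy, and_true, if_true]
    rw [filter_range_add_le (by omega), card_range]
  · simp [hy]

theorem sum_ohnoL_shuf_shufL_replicate (s m l : ℕ) :
    ∑ a ∈ range (m + 1),
        ohnoL (m - a) (shuf (ofIdx [s + a + 2]) (shufL [3] (List.replicate l 2)))
      = ∑ h ∈ Finset.Nat.antidiagonalTuple (l + 2) (m + s + 1),
          (∑ i, ∑ q ∈ univ.erase i, if 1 ≤ h q then h i + 1 - s else 0) • mzvAddTwo h := by
  have hterm : ∀ a ∈ range (m + 1),
      ohnoL (m - a) (shuf (ofIdx [s + a + 2]) (shufL [3] (List.replicate l 2)))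
        = ∑ q : Fin (l + 1), ∑ i : Fin (l + 2),
            ∑ h ∈ Finset.Nat.antidiagonalTuple (l + 2) (m + s + 1)
              with s + a ≤ h i ∧ 1 ≤ h (i.succAbove q), mzvAddTwo h := by
    intro a ha
    rw [mem_range] at ha
    rw [shufL_singleton_replicate_two 1, shuf_ofIdx_sum, ohnoL_sum]
    refine sum_congr rfl fun q _ => ?_
    rw [shuf_ofIdx_ofIdx, ohnoL_shufL_singleton, Fintype.sum_pi_single',
      show m - a + (s + a + 1) = m + s + 1 by omega]
    refine sum_congr rfl fun i _ => ?_
    simp only [Fin.forall_iff_succAbove i, Fin.insertNth_apply_same,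
      Fin.insertNth_apply_succAbove, Pi.forall_single_le_iff]
  rw [sum_congr rfl hterm, sum_comm, sum_congr rfl fun q _ =>
    sum_sum_sum_filter_eq_sum_card_smul _ _ _ _ _, sum_comm]
  refine sum_congr rfl fun h hh => ?_
  rw [← sum_smul, sum_comm]
  congr 1
  refine sum_congr rfl fun i _ => ?_
  rw [Fin.sum_erase_eq_sum_succAbove]
  refine sum_congr rfl fun q _ => card_filter_range_add_le_and ?_
  exact Finset.Nat.apply_add_apply_le_of_mem_antidiagonalTuple hh (Fin.succAbove_ne i q).symm

theorem sum_mul_sum_mzv_add_single (s m n : ℕ) :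
    ∑ f ∈ Finset.Nat.antidiagonalTuple n (m + s),
        (∑ p : Fin n, ((f p + 1 - s : ℕ) : ℝ)) *
          ∑ i : Fin n, mzv (List.ofFn fun j : Fin n => if j = i then f j + 3 else f j + 2)
      = ∑ h ∈ Finset.Nat.antidiagonalTuple n (m + s + 1),
          (∑ i, if 1 ≤ h i then ∑ p, ((h - Pi.single i 1 : Fin n → ℕ) p + 1 - s) else 0)
            • mzvAddTwo h := by
  have hword : ∀ (f : Fin n → ℕ) i,
      mzv (List.ofFn fun j : Fin n => if j = i then f j + 3 else f j + 2)
        = mzvAddTwo (f + Pi.single i 1) := fun f i =>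
    congrArg mzv (List.ofFn_inj.mpr (funext fun j => by
      rcases eq_or_ne j i with rfl | hj
      · simp
      · simp [hj]))
  have hshift : ∀ i : Fin n,
      ∑ f ∈ Finset.Nat.antidiagonalTuple n (m + s),
          (∑ p, (f p + 1 - s)) • mzvAddTwo (f + Pi.single i 1)
        = ∑ h ∈ Finset.Nat.antidiagonalTuple n (m + s + 1) with 1 ≤ h i,
            (∑ p, ((h - Pi.single i 1 : Fin n → ℕ) p + 1 - s)) • mzvAddTwo h := by
    intro i
    simp_rw [← Pi.forall_single_le_iff (i := i) (a := 1),
      show m + s + 1 = m + s + ∑ t, (Pi.single i 1 : Fin n → ℕ) t by rw [Fintype.sum_pi_single'],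
      ← Finset.Nat.sum_antidiagonalTuple_add
        (F := fun h => (∑ p, ((h - Pi.single i 1 : Fin n → ℕ) p + 1 - s)) • mzvAddTwo h),
      add_tsub_cancel_right]
  simp_rw [hword, mul_sum, ← Nat.cast_sum, ← nsmul_eq_mul]
  rw [sum_comm, sum_congr rfl fun i _ => hshift i]
  simp_rw [sum_filter, ← ite_zero_smul]
  rw [sum_comm]
  exact sum_congr rfl fun h _ => (sum_smul).symm

theorem sum_tsub_add_sum_sum_erase_eq (s : ℕ) {n : ℕ} (h : Fin n → ℕ) :
    ∑ i, (h i - s) + ∑ i, ∑ q ∈ univ.erase i, (if 1 ≤ h q then h i + 1 - s else 0)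
      = ∑ i, if 1 ≤ h i then ∑ p, ((h - Pi.single i 1 : Fin n → ℕ) p + 1 - s) else 0 := by
  rw [sum_comm' (t' := univ) (s' := fun q => univ.erase q) fun i q => by simp [ne_comm],
    ← sum_add_distrib]
  refine sum_congr rfl fun i _ => ?_
  by_cases hi : 1 ≤ h i
  · simp only [hi, if_true]
    rw [← add_sum_erase _ _ (mem_univ i)]
    congr 1
    · simp only [Pi.sub_apply, Pi.single_eq_same]
      omega
    · exact sum_congr rfl fun p hp => by simp [(mem_erase.1 hp).1]
  · simp only [hi, if_false, sum_const_zero, add_zero]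
    omega

theorem statement15_general (s m l : ℕ) :
    (∑ a ∈ Finset.range (m + 1),
        (ohnoL (m - a) (shufL [s + a + 3] (List.replicate l 2))
          + if l = 0 then 0
            else ohnoL (m - a)
              (shuf (ofIdx [s + a + 2]) (shufL [3] (List.replicate (l - 1) 2)))))
    = ∑ f ∈ Finset.Nat.antidiagonalTuple (l + 1) (m + s),
        (∑ p : Fin (l + 1), ((f p + 1 - s : ℕ) : ℝ)) *
          ∑ i : Fin (l + 1),
            mzv (List.ofFn fun j : Fin (l + 1) =>
              if j = i then f j + 3 else f j + 2) := by
  rw [sum_add_distrib, sum_ohnoL_shufL_replicate, sum_mul_sum_mzv_add_single]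
  rcases l with _ | l
  · simp only [if_true, sum_const_zero, add_zero]
    refine sum_congr rfl fun h _ => ?_
    rw [← sum_tsub_add_sum_sum_erase_eq]
    simp
  · simp only [l.succ_ne_zero, if_false, Nat.add_sub_cancel]
    rw [sum_ohnoL_shuf_shufL_replicate, ← sum_add_distrib]
    exact sum_congr rfl fun h _ => by rw [← add_smul, sum_tsub_add_sum_sum_erase_eq]

/-- For integers `s ≥ 2` and `m, l ≥ 0`,
`Σ_{a=0}^{m} ( O_{m−a}((s+a+3) ⧢ ({2}^l)) + O_{m−a}((s+a+2) ⧢ (3) ⧢ ({2}^{l−1})) )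
  = Σ_{m₁+⋯+m_{l+1}=m+s} ( Σ_{p=1}^{l+1} max{m_p−s+1, 0} ) ·
      Σ_{i=1}^{l+1} ζ(m₁+2, …, m_{i−1}+2, m_i+3, m_{i+1}+2, …, m_{l+1}+2)`,
where for `l = 0` the term involving `({2}^{l−1})` is understood to be `0`. -/
theorem statement15 (s m l : ℕ) (hs : 2 ≤ s) :
    (∑ a ∈ Finset.range (m + 1),
        (ohnoL (m - a) (shufL [s + a + 3] (List.replicate l 2))
          + if l = 0 then 0
            else ohnoL (m - a)
              (shuf (ofIdx [s + a + 2]) (shufL [3] (List.replicate (l - 1) 2)))))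
    = ∑ f ∈ Finset.Nat.antidiagonalTuple (l + 1) (m + s),
        (∑ p : Fin (l + 1), ((f p + 1 - s : ℕ) : ℝ)) *
          ∑ i : Fin (l + 1),
            mzv (List.ofFn fun j : Fin (l + 1) =>
              if j = i then f j + 3 else f j + 2) :=
  statement15_general s m l
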